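/- Let r ≥ 2, t ≥ 3, and let G be a graph with two non-adjacent vertices u, v both of degree less than ⌈r/2⌉·(t−1). Then c_{r,S_t}(G + uv) ≥ c_{r,S_t}(G), where G + uv is obtained by adding the edge uv. -/

import Mathlib

open SimpleGraph Finset

/-- `G` contains a copy of `H`, i.e. a subgraph isomorphic to `H`. -/
def SimpleGraph.ContainsCopy {V W : Type*} (G : SimpleGraph V) (H : SimpleGraph W) : Prop :=
  ∃ f : H →g G, Function.Injective f

/-- The color class of color `i` in the `r`-edge-coloring `c` of `G`. -/
def colorClass {V : Type*} {r : ℕ} (G : SimpleGraph V) (c : G.edgeSet → Fin r) (i : Fin r) :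
    SimpleGraph V :=
  SimpleGraph.fromEdgeSet {e | ∃ h : e ∈ G.edgeSet, c ⟨e, h⟩ = i}

/-- The coloring `c` of `G` has a monochromatic copy of `H`. -/
def HasMonoCopy {V W : Type*} {r : ℕ} (G : SimpleGraph V) (H : SimpleGraph W)
    (c : G.edgeSet → Fin r) : Prop :=
  ∃ i : Fin r, (colorClass G c i).ContainsCopy H

/-- `c_{r,H}(G)`: the number of `r`-edge-colorings of `G` without a monochromatic copy of `H`. -/
noncomputable def goodCount {V W : Type*} (r : ℕ) (H : SimpleGraph W) (G : SimpleGraph V) : ℕ :=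
  Nat.card {c : G.edgeSet → Fin r // ¬ HasMonoCopy G H c}

/-- `c_{r,H}(n)`: the maximum of `c_{r,H}(G)` over all graphs `G` on `n` vertices. -/
noncomputable def cMax {W : Type*} (r : ℕ) (H : SimpleGraph W) (n : ℕ) : ℕ :=
  sSup {k | ∃ G : SimpleGraph (Fin n), goodCount r H G = k}

/-- `ex(n,H)`: the maximum number of edges of an `H`-free graph on `n` vertices. -/
noncomputable def exNum {W : Type*} (n : ℕ) (H : SimpleGraph W) : ℕ :=
  sSup {k | ∃ G : SimpleGraph (Fin n), ¬ G.ContainsCopy H ∧ G.edgeSet.ncard = k}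

/-- The star `S_t` with `t` edges: center `0` joined to `t` leaves. -/
def starGraph (t : ℕ) : SimpleGraph (Fin (t + 1)) where
  Adj u v := u ≠ v ∧ (u = 0 ∨ v = 0)
  symm := ⟨fun u v h => ⟨h.1.symm, h.2.symm⟩⟩
  loopless := ⟨fun u h => h.1 rfl⟩

/-! Every `S_t`-free colouring of `G` extends to one of `G + uv`, and restricting the extension
recovers it. A colouring is `S_t`-free iff every colour class has all degrees below `t`. The
colour degrees at `u` sum to `deg u < ⌈r/2⌉ (t - 1)`, so fewer than `⌈r/2⌉` colours reach degree
`t - 1` at `u`, and likewise at `v`; hence some colour reaches it at neither, and giving `uv`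
that colour keeps every colour class `S_t`-free. -/

theorem colorClass_adj {V : Type*} {r : ℕ} (G : SimpleGraph V) (c : G.edgeSet → Fin r)
    (i : Fin r) (x y : V) : (colorClass G c i).Adj x y ↔ ∃ h : G.Adj x y, c ⟨s(x, y), h⟩ = i := by
  simp only [colorClass, fromEdgeSet_adj, Set.mem_ofPred_eq, mem_edgeSet]
  exact ⟨fun ⟨h, _⟩ => h, fun h => ⟨h, h.1.ne⟩⟩

theorem sum_ncard_neighborSet_colorClass {V : Type*} [Finite V] {r : ℕ} (G : SimpleGraph V)
    (c : G.edgeSet → Fin r) (w : V) :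
    ∑ i, ((colorClass G c i).neighborSet w).ncard = (G.neighborSet w).ncard := by
  have hunion : G.neighborSet w = ⋃ i, (colorClass G c i).neighborSet w := by
    ext x
    simp [colorClass_adj]
  have hdisj : Pairwise (Function.onFun Disjoint fun i => (colorClass G c i).neighborSet w) := by
    intro i j hij
    refine Set.disjoint_left.2 fun x hi hj => hij ?_
    obtain ⟨_, rfl⟩ := (colorClass_adj G c i w x).1 hi
    obtain ⟨_, rfl⟩ := (colorClass_adj G c j w x).1 hj
    rfl
  rw [hunion, Set.ncard_iUnion_of_finite (fun _ => Set.toFinite _) hdisj,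
    finsum_eq_sum_of_fintype]

theorem containsCopy_starGraph_iff {V : Type*} [Finite V] (K : SimpleGraph V) (t : ℕ) :
    K.ContainsCopy (_root_.starGraph t) ↔ ∃ w, t ≤ (K.neighborSet w).ncard := by
  constructor
  · rintro ⟨f, hf⟩
    refine ⟨f 0, ?_⟩
    let leaf : Fin t → K.neighborSet (f 0) :=
      fun k => ⟨f k.succ, f.map_adj ⟨(Fin.succ_ne_zero k).symm, Or.inl rfl⟩⟩
    have hleaf : Function.Injective leaf :=
      fun a b hab => Fin.succ_injective _ (hf (congrArg Subtype.val hab))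
    simpa using Nat.card_le_card_of_injective leaf hleaf
  · rintro ⟨w, hw⟩
    classical
    have := Fintype.ofFinite V
    obtain ⟨g⟩ : Nonempty (Fin t ↪ K.neighborSet w) := by
      rwa [Function.Embedding.nonempty_iff_card_le, Fintype.card_fin, ← Nat.card_eq_fintype_card,
        Nat.card_coe_set_eq]
    have hadj (k : Fin t) : K.Adj w (g k) := (g k).2
    refine ⟨⟨Fin.cons w fun k => (g k : V), ?_⟩, ?_⟩
    · rintro a b ⟨hab, rfl | rfl⟩
      · obtain ⟨k, rfl⟩ := Fin.exists_succ_eq.2 hab.symm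
        exact hadj k
      · obtain ⟨k, rfl⟩ := Fin.exists_succ_eq.2 hab
        exact (hadj k).symm
    · refine Fin.cons_injective_iff.2 ⟨?_, Subtype.val_injective.comp g.injective⟩
      rintro ⟨k, hk⟩
      exact (hadj k).ne hk.symm

theorem not_hasMonoCopy_starGraph_iff {V : Type*} [Finite V] {r : ℕ} (G : SimpleGraph V)
    (c : G.edgeSet → Fin r) (t : ℕ) :
    ¬ HasMonoCopy G (_root_.starGraph t) c ↔
      ∀ i w, ((colorClass G c i).neighborSet w).ncard < t := by
  simp [HasMonoCopy, containsCopy_starGraph_iff]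

theorem card_filter_le_lt_of_sum_lt {ι : Type*} [Fintype ι] (d : ι → ℕ) {q s : ℕ}
    (h : ∑ i, d i < q * s) : #{i | s ≤ d i} < q := by
  have hsat : #{i | s ≤ d i} * s ≤ ∑ i, d i :=
    calc #{i | s ≤ d i} * s ≤ ∑ i ∈ {i | s ≤ d i}, d i :=
          card_nsmul_le_sum _ _ _ fun i hi => (mem_filter.1 hi).2
      _ ≤ ∑ i, d i := sum_le_sum_of_subset (subset_univ _)
  exact Nat.lt_of_mul_lt_mul_right (hsat.trans_lt h)

theorem exists_lt_and_lt_of_sum_lt {ι : Type*} [Fintype ι] (d e : ι → ℕ) {s : ℕ}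
    (hd : ∑ i, d i < (Fintype.card ι + 1) / 2 * s)
    (he : ∑ i, e i < (Fintype.card ι + 1) / 2 * s) : ∃ i, d i < s ∧ e i < s := by
  classical
  set A : Finset ι := {i | s ≤ d i}
  set B : Finset ι := {i | s ≤ e i}
  have hA : #A < (Fintype.card ι + 1) / 2 := card_filter_le_lt_of_sum_lt d hd
  have hB : #B < (Fintype.card ι + 1) / 2 := card_filter_le_lt_of_sum_lt e he
  have hcard : #(A ∪ B) < #(univ : Finset ι) := by
    have := card_union_le A B
    rw [card_univ]
    omega
  obtain ⟨i, -, hi⟩ := exists_mem_notMem_of_card_lt_card hcard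
  simp only [A, B, mem_union, mem_filter, mem_univ, true_and, not_or, not_le] at hi
  exact ⟨i, hi⟩

theorem ncard_neighborSet_edge_le_one {V : Type*} [Finite V] (u v w : V) :
    ((edge u v).neighborSet w).ncard ≤ 1 :=
  (Set.ncard_le_one (Set.toFinite _)).2 fun x hx y hy => by grind [mem_neighborSet]

theorem ncard_neighborSet_sup_edge_lt {V : Type*} [Finite V] {K : SimpleGraph V} {u v : V}
    {t : ℕ} (hK : ∀ w, (K.neighborSet w).ncard < t) (hu : (K.neighborSet u).ncard + 1 < t)
    (hv : (K.neighborSet v).ncard + 1 < t) (w : V) : ((K ⊔ edge u v).neighborSet w).ncard < t := by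
  rw [neighborSet_sup]
  by_cases hw : w = u ∨ w = v
  · have := Set.ncard_union_le (K.neighborSet w) ((edge u v).neighborSet w)
    have := ncard_neighborSet_edge_le_one u v w
    rcases hw with rfl | rfl <;> omega
  · have hempty : (edge u v).neighborSet w = ∅ := by
      ext x
      grind [mem_neighborSet]
    rw [hempty, Set.union_empty]
    exact hK w

theorem goodCount_le_of_forall_extend {V W : Type*} [Finite V] {r : ℕ} {H : SimpleGraph W}
    {G G' : SimpleGraph V} (hle : G ≤ G')
    (hext : ∀ c : G.edgeSet → Fin r, ¬ HasMonoCopy G H c → ∃ c' : G'.edgeSet → Fin r,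
      ¬ HasMonoCopy G' H c' ∧ c' ∘ Set.inclusion (edgeSet_mono hle) = c) :
    goodCount r H G ≤ goodCount r H G' := by
  choose extend hgood hres using hext
  refine Nat.card_le_card_of_injective (fun c => ⟨extend c.1 c.2, hgood c.1 c.2⟩)
    fun c d hcd => Subtype.ext ?_
  rw [← hres c.1 c.2, ← hres d.1 d.2]
  exact congrArg (· ∘ _) (congrArg Subtype.val hcd)

section Extension

variable {V : Type*} {r : ℕ} {G G' : SimpleGraph V}

open Classical in
noncomputable def extendEdgeColoring (c : G.edgeSet → Fin r) (i : Fin r) :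
    G'.edgeSet → Fin r :=
  fun e => if h : (e : Sym2 V) ∈ G.edgeSet then c ⟨e, h⟩ else i

theorem extendEdgeColoring_comp_inclusion (hle : G ≤ G') (c : G.edgeSet → Fin r) (i : Fin r) :
    extendEdgeColoring c i ∘ Set.inclusion (edgeSet_mono hle) = c := by
  funext e
  simp [extendEdgeColoring, e.2]

theorem colorClass_extendEdgeColoring_of_ne (hle : G ≤ G') (c : G.edgeSet → Fin r)
    {i j : Fin r} (hji : j ≠ i) : colorClass G' (extendEdgeColoring c i) j = colorClass G c j := by
  ext x y
  simp only [colorClass_adj, extendEdgeColoring]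
  by_cases h : G.Adj x y
  · simp [h, hle h]
  · simp [h, Ne.symm hji]

theorem colorClass_sup_edge_extendEdgeColoring_self {u v : V} (huv : ¬ G.Adj u v)
    (c : G.edgeSet → Fin r) (i : Fin r) :
    colorClass (G ⊔ edge u v) (extendEdgeColoring c i) i = colorClass G c i ⊔ edge u v := by
  ext x y
  simp only [colorClass_adj, extendEdgeColoring, sup_adj]
  by_cases h : G.Adj x y
  · have hxy : ¬ (edge u v).Adj x y := fun he => by grind [adj_symm]
    simp [h, hxy]
  · simp [h]

theorem not_hasMonoCopy_starGraph_sup_edge_extendEdgeColoring [Finite V] {t : ℕ} {u v : V}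
    (huv : ¬ G.Adj u v) {c : G.edgeSet → Fin r} (hc : ¬ HasMonoCopy G (_root_.starGraph t) c)
    {i : Fin r} (hiu : ((colorClass G c i).neighborSet u).ncard + 1 < t)
    (hiv : ((colorClass G c i).neighborSet v).ncard + 1 < t) :
    ¬ HasMonoCopy (G ⊔ edge u v) (_root_.starGraph t) (extendEdgeColoring c i) := by
  rw [not_hasMonoCopy_starGraph_iff] at hc ⊢
  intro j
  rcases eq_or_ne j i with rfl | hji
  · rw [colorClass_sup_edge_extendEdgeColoring_self huv]
    exact ncard_neighborSet_sup_edge_lt (hc j) hiu hiv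
  · rw [colorClass_extendEdgeColoring_of_ne le_sup_left c hji]
    exact hc j

end Extension

theorem stmt6_general {V : Type*} [Fintype V] (r t : ℕ)
    (G : SimpleGraph V) (u v : V) (hnadj : ¬ G.Adj u v)
    (hu : (G.neighborSet u).ncard < ((r + 1) / 2) * (t - 1))
    (hv : (G.neighborSet v).ncard < ((r + 1) / 2) * (t - 1)) :
    goodCount r (_root_.starGraph t) G ≤
      goodCount r (_root_.starGraph t) (G ⊔ SimpleGraph.fromEdgeSet {s(u, v)}) := by
  refine goodCount_le_of_forall_extend (G' := G ⊔ edge u v) le_sup_left fun c hc => ?_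
  let colorDegree (w : V) (i : Fin r) := ((colorClass G c i).neighborSet w).ncard
  have hsum (w : V) : ∑ i, colorDegree w i = (G.neighborSet w).ncard :=
    sum_ncard_neighborSet_colorClass G c w
  obtain ⟨i, hiu, hiv⟩ := exists_lt_and_lt_of_sum_lt (colorDegree u) (colorDegree v)
    (s := t - 1) (by rwa [hsum, Fintype.card_fin]) (by rwa [hsum, Fintype.card_fin])
  exact ⟨extendEdgeColoring c i,
    not_hasMonoCopy_starGraph_sup_edge_extendEdgeColoring hnadj hc
      (Nat.add_lt_of_lt_sub hiu) (Nat.add_lt_of_lt_sub hiv),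
    extendEdgeColoring_comp_inclusion le_sup_left c i⟩

theorem stmt6 {V : Type*} [Fintype V] (r t : ℕ) (hr : 2 ≤ r) (ht : 3 ≤ t)
    (G : SimpleGraph V) (u v : V) (hne : u ≠ v) (hnadj : ¬ G.Adj u v)
    (hu : (G.neighborSet u).ncard < ((r + 1) / 2) * (t - 1))
    (hv : (G.neighborSet v).ncard < ((r + 1) / 2) * (t - 1)) :
    goodCount r (_root_.starGraph t) G ≤
      goodCount r (_root_.starGraph t) (G ⊔ SimpleGraph.fromEdgeSet {s(u, v)}) :=
  stmt6_general r t G u v hnadj hu hv
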